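/- arXiv:2102.02674 — 2 statements merged into one kernel-verified Lean document; each statement's English description precedes it below -/
import Mathlib

section
/- If G is a K_{2,r+1}-free graph with r ≥ 2, m ≥ 16r² edges, and no isolated vertices, then ρ(G) ≤ √m, with equality if and only if G is the star K_{1,m}. -/
open Finset

/-- Real adjacency matrix of a simple graph. -/
noncomputable def adjMat {V : Type*} [Fintype V] (G : SimpleGraph V) : Matrix V V ℝ :=
  Matrix.of fun i j => haveI := Classical.dec (G.Adj i j); if G.Adj i j then (1 : ℝ) else 0

/-- `μ` is an eigenvalue of the adjacency matrix of `G`. -/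
def IsAdjEigenvalue {V : Type*} [Fintype V] (G : SimpleGraph V) (μ : ℝ) : Prop :=
  ∃ x : V → ℝ, x ≠ 0 ∧ (adjMat G).mulVec x = μ • x

/-- `ρ` is the spectral radius (largest adjacency eigenvalue) of `G`. -/
def IsSpecRad {V : Type*} [Fintype V] (G : SimpleGraph V) (ρ : ℝ) : Prop :=
  IsAdjEigenvalue G ρ ∧ ∀ μ : ℝ, IsAdjEigenvalue G μ → μ ≤ ρ

/-- `G` contains a copy of `F` as a subgraph. -/
def Contains {V W : Type*} (G : SimpleGraph V) (F : SimpleGraph W) : Prop :=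
  ∃ f : W → V, Function.Injective f ∧ ∀ a b, F.Adj a b → G.Adj (f a) (f b)

/-- `G` contains a cycle of length `t`. -/
def HasCycleLen {V : Type*} (G : SimpleGraph V) (t : ℕ) : Prop :=
  ∃ (v : V) (w : G.Walk v v), w.IsCycle ∧ w.length = t

/-!
Scale an eigenvector of `ρ` so that its largest entry in absolute value is `y u = 1`. Expanding
`ρ² = ρ (A y)_u` over walks of length two from `u` and using `ρ |y w| ≤ d(w)` gives
`(ρ² - d(u)) ρ ≤ ∑_{w ≠ u} |N(u) ∩ N(w)| d(w) ≤ 2 (r + 1) (m - d(u))`,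
the last step because two vertices have at most `r` common neighbours. When `ρ ≥ √m ≥ 4r`, this
forces `d(u) = m` and then `ρ = √m`; all edges meet `u`, so without isolated vertices `G` is the
star `K_{1,m}`, whose spectral radius is `√m`.
-/

open SimpleGraph

section

variable {V : Type*} [Fintype V] {G : SimpleGraph V}

lemma adjMat_eq_adjMatrix [DecidableRel G.Adj] : adjMat G = G.adjMatrix ℝ := by
  ext i j
  simp [adjMat, adjMatrix_apply]

lemma adjMat_submatrix {W : Type*} [Fintype W] {H : SimpleGraph W} (φ : G ≃g H) :
    (adjMat H).submatrix φ φ = adjMat G := by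
  ext i j
  classical
  simp [adjMat, φ.map_adj_iff]

lemma IsAdjEigenvalue.of_iso {W : Type*} [Fintype W] {H : SimpleGraph W} (φ : G ≃g H) {μ : ℝ}
    (h : IsAdjEigenvalue H μ) : IsAdjEigenvalue G μ := by
  obtain ⟨x, hx0, hx⟩ := h
  refine ⟨x ∘ φ, fun h0 => hx0 (funext fun w => by simpa using congrFun h0 (φ.symm w)), ?_⟩
  rw [← adjMat_submatrix φ, show (φ : V → W) = φ.toEquiv from rfl,
    Matrix.submatrix_mulVec_equiv, Function.comp_assoc, Equiv.self_comp_symm,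
    Function.comp_id, hx]
  rfl

lemma isAdjEigenvalue_star {m : ℕ} (hm : 0 < m) :
    IsAdjEigenvalue (completeBipartiteGraph (Fin 1) (Fin m)) (Real.sqrt m) := by
  classical
  refine ⟨Sum.elim (fun _ => Real.sqrt m) (fun _ => 1), fun h => ?_, ?_⟩
  · simpa using congrFun h (Sum.inr ⟨0, hm⟩)
  · ext (i | j) <;>
      simp [adjMat, Matrix.mulVec, dotProduct, Fintype.sum_sum_type, completeBipartiteGraph_adj]

lemma card_inter_neighborFinset_le [DecidableEq V] [DecidableRel G.Adj] {r : ℕ}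
    (hfree : ¬ Contains G (completeBipartiteGraph (Fin 2) (Fin (r + 1))))
    {u w : V} (huw : u ≠ w) :
    #(G.neighborFinset u ∩ G.neighborFinset w) ≤ r := by
  by_contra! hcard
  obtain ⟨t, hts, htc⟩ := exists_subset_card_eq hcard
  let e : Fin (r + 1) ≃ t := (t.equivFinOfCardEq htc).symm
  have hadj : ∀ i : Fin 2, ∀ j, G.Adj (![u, w] i) (e j) := fun i j => by
    have := hts (e j).2
    fin_cases i <;> simp_all
  refine hfree ⟨Sum.elim ![u, w] (fun j => e j), ?_, ?_⟩
  · refine Function.Injective.sumElim ?_ (Subtype.val_injective.comp e.injective)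
      fun i j => (hadj i j).ne
    intro i j
    fin_cases i <;> fin_cases j <;> simp [huw, huw.symm]
  · rintro (i | i) (j | j) h <;> simp at h
    · exact hadj i j
    · exact (hadj j i).symm

section Counting

variable [DecidableEq V] [DecidableRel G.Adj]

lemma sum_sum_erase_neighborFinset {M : Type*} [AddCommMonoid M] (u : V) (f : V → M) :
    ∑ v ∈ G.neighborFinset u, ∑ w ∈ (G.neighborFinset v).erase u, f w
      = ∑ w ∈ univ.erase u, #(G.neighborFinset u ∩ G.neighborFinset w) • f w := by
  rw [sum_comm' (t' := univ.erase u) (s' := fun w => G.neighborFinset u ∩ G.neighborFinset w)]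
  · simp only [sum_const]
  · intro v w
    simp only [mem_neighborFinset, mem_erase, mem_inter, mem_univ, G.adj_comm w v]
    tauto

lemma sum_card_erase_neighborFinset (u : V) :
    ∑ w ∈ univ.erase u, #((G.neighborFinset w).erase u) + 2 * G.degree u
      = 2 * #G.edgeFinset := by
  have hdeg : ∀ w, #((G.neighborFinset w).erase u) + (if G.Adj u w then 1 else 0)
      = G.degree w := fun w => by
    rw [← card_neighborFinset_eq_degree]
    by_cases h : G.Adj u w
    · rw [if_pos h, card_erase_add_one ((G.mem_neighborFinset w u).mpr h.symm)]
    · rw [if_neg h, erase_eq_of_notMem (by simpa [G.adj_comm] using h), add_zero]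
  have hsum := sum_erase_add univ (fun w => #((G.neighborFinset w).erase u)) (mem_univ u)
  rw [erase_eq_of_notMem (G.notMem_neighborFinset_self u), card_neighborFinset_eq_degree] at hsum
  have hboole : ∑ w, (if G.Adj u w then 1 else 0) = G.degree u := by
    rw [sum_boole, ← neighborFinset_eq_filter, card_neighborFinset_eq_degree, Nat.cast_id]
  rw [← sum_degrees_eq_twice_card_edges, ← sum_congr rfl fun w _ => hdeg w, sum_add_distrib,
    hboole]
  omega

lemma sum_sum_erase_degree_le {r : ℕ}
    (hfree : ¬ Contains G (completeBipartiteGraph (Fin 2) (Fin (r + 1)))) (u : V) :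
    ∑ v ∈ G.neighborFinset u, ∑ w ∈ (G.neighborFinset v).erase u, G.degree w
      ≤ 2 * (r + 1) * (#G.edgeFinset - G.degree u) := by
  rw [sum_sum_erase_neighborFinset]
  have hpoint : ∀ w ∈ univ.erase u, #(G.neighborFinset u ∩ G.neighborFinset w) • G.degree w
      ≤ (r + 1) * #((G.neighborFinset w).erase u) := fun w hw => by
    have hr := card_inter_neighborFinset_le hfree (ne_of_mem_erase hw).symm
    have hsub : #(G.neighborFinset u ∩ G.neighborFinset w) ≤ #((G.neighborFinset w).erase u) :=
      card_le_card fun z hz => by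
        simp only [mem_inter, mem_neighborFinset] at hz
        exact mem_erase.mpr ⟨hz.1.ne', (G.mem_neighborFinset w z).mpr hz.2⟩
    have hdeg : G.degree w ≤ #((G.neighborFinset w).erase u) + 1 := by
      have := pred_card_le_card_erase (s := G.neighborFinset w) (a := u)
      rw [card_neighborFinset_eq_degree] at this
      omega
    rw [smul_eq_mul]
    nlinarith
  have htotal := sum_card_erase_neighborFinset (G := G) u
  calc _ ≤ ∑ w ∈ univ.erase u, (r + 1) * #((G.neighborFinset w).erase u) := sum_le_sum hpoint
    _ = 2 * (r + 1) * (#G.edgeFinset - G.degree u) := by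
      rw [← mul_sum, mul_comm 2, mul_assoc]
      congr 1
      omega

end Counting

section Eigenvector

variable [DecidableRel G.Adj] {ρ : ℝ}

lemma IsAdjEigenvalue.exists_normalized (h : IsAdjEigenvalue G ρ) :
    ∃ (y : V → ℝ) (u : V), y u = 1 ∧ (∀ w, |y w| ≤ 1) ∧
      ∀ v, ∑ w ∈ G.neighborFinset v, y w = ρ * y v := by
  obtain ⟨x, hx0, hx⟩ := h
  obtain ⟨v₀, hv₀⟩ := Function.ne_iff.mp hx0
  obtain ⟨u, -, hu⟩ := exists_max_image univ (fun w => |x w|) ⟨v₀, mem_univ v₀⟩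
  have hxu : 0 < |x u| := (abs_pos.mpr hv₀).trans_le (hu v₀ (mem_univ v₀))
  refine ⟨fun w => x w / x u, u, div_self (abs_pos.mp hxu), fun w => ?_, fun v => ?_⟩
  · rw [abs_div]
    exact div_le_one_of_le₀ (hu w (mem_univ w)) hxu.le
  · rw [← sum_div, ← adjMatrix_mulVec_apply, ← adjMat_eq_adjMatrix, hx, Pi.smul_apply,
      smul_eq_mul, mul_div_assoc]

variable {y : V → ℝ}

lemma mul_abs_le_degree (hy1 : ∀ w, |y w| ≤ 1)
    (hy : ∀ v, ∑ w ∈ G.neighborFinset v, y w = ρ * y v) (hρ : 0 ≤ ρ) (w : V) :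
    ρ * |y w| ≤ G.degree w := by
  calc ρ * |y w| = |∑ v ∈ G.neighborFinset w, y v| := by rw [hy, abs_mul, abs_of_nonneg hρ]
    _ ≤ ∑ v ∈ G.neighborFinset w, |y v| := abs_sum_le_sum_abs _ _
    _ ≤ ∑ v ∈ G.neighborFinset w, 1 := sum_le_sum fun v _ => hy1 v
    _ = G.degree w := by simp

lemma sq_sub_degree_mul_le [DecidableEq V] (hy1 : ∀ w, |y w| ≤ 1)
    (hy : ∀ v, ∑ w ∈ G.neighborFinset v, y w = ρ * y v) (hρ : 0 ≤ ρ) {u : V} (hyu : y u = 1) :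
    (ρ ^ 2 - G.degree u) * ρ
      ≤ ∑ v ∈ G.neighborFinset u, ∑ w ∈ (G.neighborFinset v).erase u, (G.degree w : ℝ) := by
  have hsq : ρ ^ 2 - G.degree u
      = ∑ v ∈ G.neighborFinset u, ∑ w ∈ (G.neighborFinset v).erase u, y w := by
    have hstep : ∀ v ∈ G.neighborFinset u, ρ * y v
        = 1 + ∑ w ∈ (G.neighborFinset v).erase u, y w := fun v hv => by
      rw [← hy, ← add_sum_erase _ y ((G.mem_neighborFinset v u).mpr
        ((G.mem_neighborFinset u v).mp hv).symm), hyu]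
    calc ρ ^ 2 - G.degree u = ∑ v ∈ G.neighborFinset u, ρ * y v - G.degree u := by
          rw [← mul_sum, hy, hyu, mul_one, sq]
      _ = _ := by rw [sum_congr rfl hstep, sum_add_distrib]; simp
  rw [hsq, sum_mul]
  refine sum_le_sum fun v _ => ?_
  rw [sum_mul]
  refine sum_le_sum fun w _ => ?_
  calc y w * ρ ≤ ρ * |y w| := by nlinarith [le_abs_self (y w)]
    _ ≤ G.degree w := mul_abs_le_degree hy1 hy hρ w

end Eigenvector

theorem exists_degree_eq_of_sqrt_le [DecidableEq V] [DecidableRel G.Adj]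
    {r m : ℕ} (hr : 2 ≤ r) (hm : #G.edgeFinset = m) (hm16 : 16 * r ^ 2 ≤ m)
    (hfree : ¬ Contains G (completeBipartiteGraph (Fin 2) (Fin (r + 1))))
    {ρ : ℝ} (hρ : IsAdjEigenvalue G ρ) (hle : Real.sqrt m ≤ ρ) :
    ∃ u, G.degree u = m ∧ ρ = Real.sqrt m := by
  obtain ⟨y, u, hyu, hy1, hy⟩ := hρ.exists_normalized
  have hdm : G.degree u ≤ m := hm ▸ G.degree_le_card_edgeFinset u
  have hr' : (2 : ℝ) ≤ r := by exact_mod_cast hr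
  have h4r : 4 * (r : ℝ) ≤ Real.sqrt m :=
    Real.le_sqrt_of_sq_le (by exact_mod_cast (by linarith : (4 * r) ^ 2 ≤ m))
  have hρr : 2 * (r + 1) < ρ := by linarith
  have hmρ : (m : ℝ) ≤ ρ ^ 2 := (Real.sqrt_le_iff.mp hle).2
  have hcount : (ρ ^ 2 - G.degree u) * ρ ≤ 2 * (r + 1) * (m - G.degree u) := by
    have := (Nat.cast_le (α := ℝ)).mpr (hm ▸ sum_sum_erase_degree_le hfree u)
    push_cast [Nat.cast_sub hdm] at this
    exact (sq_sub_degree_mul_le hy1 hy (by linarith) hyu).trans this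
  -- `d < m` would give `(m - d) ρ ≤ 2 (r + 1) (m - d)`, contradicting `ρ > 2 (r + 1)`
  have hdeg : G.degree u = m := by
    by_contra hne
    have hlt : (G.degree u : ℝ) + 1 ≤ m := by exact_mod_cast lt_of_le_of_ne hdm hne
    nlinarith [mul_le_mul_of_nonneg_right (sub_le_sub_right hmρ (G.degree u : ℝ))
      (by linarith : (0 : ℝ) ≤ ρ)]
  refine ⟨u, hdeg, le_antisymm ?_ hle⟩
  rw [hdeg, sub_self, mul_zero] at hcount
  exact Real.le_sqrt_of_sq_le (by nlinarith)

lemma eq_or_eq_of_degree_eq_card_edgeFinset [DecidableEq V] [DecidableRel G.Adj] {u : V}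
    (hu : G.degree u = #G.edgeFinset) {v w : V} (hvw : G.Adj v w) : v = u ∨ w = u := by
  have hinc : G.incidenceFinset u = G.edgeFinset :=
    eq_of_subset_of_card_le (G.incidenceFinset_subset u)
      (by rw [card_incidenceFinset_eq_degree, hu])
  have := (G.mem_incidenceFinset u s(v, w)).mp (hinc ▸ G.mem_edgeFinset.mpr hvw)
  simpa [eq_comm] using this.2

lemma nonempty_iso_star_of_degree_eq [DecidableEq V] [DecidableRel G.Adj]
    (hiso : ∀ v, ∃ w, G.Adj v w) {u : V} (hu : G.degree u = #G.edgeFinset) :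
    Nonempty (G ≃g completeBipartiteGraph (Fin 1) (Fin #G.edgeFinset)) := by
  have hadj : ∀ v, G.Adj u v ↔ v ≠ u := fun v => ⟨Adj.ne', fun hv => by
    obtain ⟨w, hvw⟩ := hiso v
    rcases eq_or_eq_of_degree_eq_card_edgeFinset hu hvw with rfl | rfl
    exacts [absurd rfl hv, hvw.symm]⟩
  let ψ : completeBipartiteGraph {v // v = u} {v // v ≠ u} ≃g G :=
    ⟨Equiv.sumCompl (· = u), by
      rintro (⟨a, rfl⟩ | ⟨a, ha⟩) (⟨b, hb⟩ | ⟨b, hb⟩)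
      · simp [hb]
      · simpa using (hadj b).2 hb
      · simpa [hb, G.adj_comm] using (hadj a).2 ha
      · simpa using fun h => (eq_or_eq_of_degree_eq_card_edgeFinset hu h).elim ha hb⟩
  have hcard : Fintype.card {v // v ≠ u} = #G.edgeFinset := by
    rw [← hu, ← card_neighborSet_eq_degree]
    exact Fintype.card_congr (Equiv.subtypeEquivRight fun v => (hadj v).symm)
  exact ⟨ψ.symm.trans (completeBipartiteGraphCongr
    (Fintype.equivFinOfCardEq (Fintype.card_subtype_eq u)) (Fintype.equivFinOfCardEq hcard))⟩

end

theorem stmt3 {V : Type*} [Fintype V] (G : SimpleGraph V) (r m : ℕ) (hr : 2 ≤ r)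
    (hm : Nat.card G.edgeSet = m) (hm16 : 16 * r ^ 2 ≤ m)
    (hfree : ¬ Contains G (completeBipartiteGraph (Fin 2) (Fin (r + 1))))
    (hiso : ∀ v : V, ∃ u, G.Adj v u)
    (ρ : ℝ) (hρ : IsSpecRad G ρ) :
    ρ ≤ Real.sqrt m ∧
      (ρ = Real.sqrt m ↔
        Nonempty (G ≃g completeBipartiteGraph (Fin 1) (Fin m))) := by
  classical
  have hmE : #G.edgeFinset = m := by rw [edgeFinset_card, ← Nat.card_eq_fintype_card, hm]
  have hle : ρ ≤ Real.sqrt m := by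
    by_contra! hlt
    obtain ⟨-, -, heq⟩ := exists_degree_eq_of_sqrt_le hr hmE hm16 hfree hρ.1 hlt.le
    exact hlt.ne' heq
  refine ⟨hle, fun heq => ?_, fun ⟨φ⟩ => ?_⟩
  · obtain ⟨u, hu, -⟩ := exists_degree_eq_of_sqrt_le hr hmE hm16 hfree hρ.1 heq.ge
    exact hmE ▸ nonempty_iso_star_of_degree_eq hiso (hu.trans hmE.symm)
  · have hm0 : 0 < m := by nlinarith
    exact le_antisymm hle (hρ.2 _ ((isAdjEigenvalue_star hm0).of_iso φ))
end

section
/- For the graph H_{t,0}∘R_k (k copies of K_4 sharing a vertex u, with t pendant vertices attached at u), the spectral radius ρ satisfies ρ³ − 2ρ² − (3k+t)ρ + 2t = 0. -/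
open Finset

/-- `HR k t` : `k` copies of `K₄` sharing the single common vertex `Sum.inl ()`,
together with `t` pendant vertices attached to that common vertex. -/
def HR (k t : ℕ) : SimpleGraph (Unit ⊕ (Fin k × Fin 3) ⊕ Fin t) :=
  SimpleGraph.fromRel (fun a b =>
    match a, b with
    | Sum.inl _, _ => True
    | Sum.inr (Sum.inl p), Sum.inr (Sum.inl q) => p.1 = q.1
    | _, _ => False)

/-
Let `x` be an eigenvector of `HR k t` for an eigenvalue `μ`, with value `a` at the centre. The
equations at the pendant vertices give `μ x_v = a`, and summed over the three non-central vertices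
of a `K₄`-block they give `(μ - 2) s = 3a` for the block sum `s`; so `μ (μ - 2)` times the equation
at the centre reads `a (μ³ - 2μ² - (3k + t)μ + 2t) = 0`. For `μ ∉ {0, 2, -1}` the vector cannot
vanish at the centre, so `μ` is a root of the cubic. Conversely every root `r ∉ {0, 2}` is an
eigenvalue, and the cubic has a root beyond `2` (its value there is `-6k < 0`); hence `ρ > 2` and
`ρ` is a root.
-/

open Matrix

lemma adjMat_mulVec_apply {V : Type*} [Fintype V] (G : SimpleGraph V) [DecidableRel G.Adj]
    (x : V → ℝ) (v : V) : (adjMat G *ᵥ x) v = ∑ w with G.Adj v w, x w := by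
  simp only [mulVec, dotProduct, adjMat, of_apply, sum_filter]
  refine sum_congr rfl fun w _ => ?_
  split_ifs <;> simp

def hrCubic (k t : ℕ) (x : ℝ) : ℝ :=
  x ^ 3 - 2 * x ^ 2 - (3 * (k : ℝ) + t) * x + 2 * t

lemma exists_hrCubic_root_gt_two {k : ℕ} (hk : 1 ≤ k) (t : ℕ) :
    ∃ r, 2 < r ∧ hrCubic k t r = 0 := by
  have hk' : (1 : ℝ) ≤ k := by exact_mod_cast hk
  set M : ℝ := 3 * k + t + 3
  have hM : 2 ≤ M := by have : (0 : ℝ) ≤ t := t.cast_nonneg; linarith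
  have h2 : hrCubic k t 2 < 0 := by simp only [hrCubic]; nlinarith
  have hMpos : 0 < hrCubic k t M := by simp only [hrCubic, M]; nlinarith
  obtain ⟨r, hr, hr0⟩ := intermediate_value_Ioo hM (by unfold hrCubic; fun_prop) ⟨h2, hMpos⟩
  exact ⟨r, hr.1, hr0⟩

section HR

variable {k t : ℕ}

lemma HR_mulVec_center (x : Unit ⊕ (Fin k × Fin 3) ⊕ Fin t → ℝ) :
    (adjMat (HR k t) *ᵥ x) (.inl ()) = ∑ p, x (.inr (.inl p)) + ∑ j, x (.inr (.inr j)) := by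
  classical
  rw [adjMat_mulVec_apply, sum_filter]
  simp [Fintype.sum_sum_type, HR]

lemma HR_mulVec_block (x : Unit ⊕ (Fin k × Fin 3) ⊕ Fin t → ℝ) (p : Fin k × Fin 3) :
    (adjMat (HR k t) *ᵥ x) (.inr (.inl p)) =
      x (.inl ()) + ∑ j, x (.inr (.inl (p.1, j))) - x (.inr (.inl p)) := by
  classical
  rw [adjMat_mulVec_apply, sum_filter]
  have hadj (q : Fin k × Fin 3) :
      (HR k t).Adj (.inr (.inl p)) (.inr (.inl q)) ↔ p.1 = q.1 ∧ p ≠ q := by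
    simp [HR]; tauto
  have hsplit (q : Fin k × Fin 3) : (if p.1 = q.1 ∧ p ≠ q then x (.inr (.inl q)) else 0) =
      (if p.1 = q.1 then x (.inr (.inl q)) else 0) - if p = q then x (.inr (.inl q)) else 0 := by
    by_cases h : p = q <;> simp [h]
  simp only [Fintype.sum_sum_type, hadj, hsplit, sum_sub_distrib, sum_ite_eq,
    mem_univ, if_true, Fintype.sum_prod_type_right]
  simp [HR, add_sub_assoc]

lemma HR_mulVec_pendant (x : Unit ⊕ (Fin k × Fin 3) ⊕ Fin t → ℝ) (j : Fin t) :
    (adjMat (HR k t) *ᵥ x) (.inr (.inr j)) = x (.inl ()) := by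
  classical
  rw [adjMat_mulVec_apply, sum_filter]
  simp [Fintype.sum_sum_type, HR]

-- The equations at block and pendant vertices hold for every `r`; the one at the centre is `hrCubic`.
lemma isAdjEigenvalue_HR_of_hrCubic_eq_zero {r : ℝ} (h0 : r ≠ 0) (h2 : r ≠ 2)
    (hr : hrCubic k t r = 0) : IsAdjEigenvalue (HR k t) r := by
  refine ⟨Sum.elim (fun _ => r * (r - 2)) (Sum.elim (fun _ => r) (fun _ => r - 2)), ?_, ?_⟩
  · intro h
    have := congrFun h (.inl ())
    simp_all [sub_eq_zero]
  · ext (_ | p | j)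
    · rw [HR_mulVec_center]
      simp only [hrCubic] at hr
      simp only [Sum.elim_inr, Sum.elim_inl, sum_const, card_univ, Fintype.card_prod,
        Fintype.card_fin, nsmul_eq_mul, Nat.cast_mul, Nat.cast_ofNat,
        Pi.smul_apply, smul_eq_mul]
      linear_combination -hr
    · rw [HR_mulVec_block]
      simp only [Sum.elim_inl, Sum.elim_inr, sum_const, card_univ, Fintype.card_fin,
        nsmul_eq_mul, Nat.cast_ofNat, Pi.smul_apply, smul_eq_mul]
      ring
    · simp [HR_mulVec_pendant]

section Eigenvector

variable {μ : ℝ} {x : Unit ⊕ (Fin k × Fin 3) ⊕ Fin t → ℝ} (hx : adjMat (HR k t) *ᵥ x = μ • x)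
include hx

lemma HR_eigen_pendant (j : Fin t) : μ * x (.inr (.inr j)) = x (.inl ()) := by
  simpa [HR_mulVec_pendant] using (congrFun hx (.inr (.inr j))).symm

lemma HR_eigen_block (p : Fin k × Fin 3) :
    (μ + 1) * x (.inr (.inl p)) = x (.inl ()) + ∑ j, x (.inr (.inl (p.1, j))) := by
  have := congrFun hx (.inr (.inl p))
  rw [HR_mulVec_block] at this
  simp only [Pi.smul_apply, smul_eq_mul] at this
  linarith

lemma HR_eigen_blockSum (i : Fin k) :
    (μ - 2) * ∑ j, x (.inr (.inl (i, j))) = 3 * x (.inl ()) := by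
  have := sum_congr rfl fun j (_ : j ∈ univ) => HR_eigen_block hx (i, j)
  simp only [← mul_sum, sum_add_distrib, sum_const, card_univ,
    Fintype.card_fin, nsmul_eq_mul] at this
  push_cast at this
  linarith

lemma HR_eigen_center_mul_hrCubic : x (.inl ()) * hrCubic k t μ = 0 := by
  have hcenter := congrFun hx (.inl ())
  rw [HR_mulVec_center, Fintype.sum_prod_type] at hcenter
  simp only [Pi.smul_apply, smul_eq_mul] at hcenter
  have hblocks : (μ - 2) * ∑ i, ∑ j, x (.inr (.inl (i, j))) = 3 * k * x (.inl ()) := by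
    simp only [mul_sum, HR_eigen_blockSum hx, sum_const, card_univ, Fintype.card_fin,
      nsmul_eq_mul]
    ring
  have hpendants : μ * ∑ j, x (.inr (.inr j)) = t * x (.inl ()) := by
    simp [mul_sum, HR_eigen_pendant hx]
  simp only [hrCubic]
  linear_combination μ * hblocks + (μ - 2) * hpendants - μ * (μ - 2) * hcenter

lemma HR_eigen_center_ne_zero (hx0 : x ≠ 0) (h0 : μ ≠ 0) (h2 : μ ≠ 2) (h1 : μ ≠ -1) :
    x (.inl ()) ≠ 0 := by
  intro ha
  apply hx0
  ext (_ | p | j)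
  · exact ha
  · have hs := HR_eigen_blockSum hx p.1
    have hb := HR_eigen_block hx p
    rw [ha, mul_zero, mul_eq_zero] at hs
    rw [ha, hs.resolve_left (sub_ne_zero.2 h2), add_zero, mul_eq_zero] at hb
    exact hb.resolve_left (by contrapose! h1; linarith)
  · have := HR_eigen_pendant hx j
    rw [ha, mul_eq_zero] at this
    exact this.resolve_left h0

end Eigenvector

lemma hrCubic_eq_zero_of_isAdjEigenvalue_HR {μ : ℝ} (h0 : μ ≠ 0) (h2 : μ ≠ 2) (h1 : μ ≠ -1)
    (hμ : IsAdjEigenvalue (HR k t) μ) : hrCubic k t μ = 0 := by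
  obtain ⟨x, hx0, hx⟩ := hμ
  exact (mul_eq_zero.1 (HR_eigen_center_mul_hrCubic hx)).resolve_left
    (HR_eigen_center_ne_zero hx hx0 h0 h2 h1)

end HR

theorem stmt13 (k t : ℕ) (hk : 1 ≤ k)
    (ρ : ℝ) (hρ : IsSpecRad (HR k t) ρ) :
    ρ ^ 3 - 2 * ρ ^ 2 - (3 * (k : ℝ) + t) * ρ + 2 * t = 0 := by
  obtain ⟨r, hr2, hr⟩ := exists_hrCubic_root_gt_two hk t
  have hρ2 : 2 < ρ :=
    hr2.trans_le (hρ.2 r (isAdjEigenvalue_HR_of_hrCubic_eq_zero (by linarith) hr2.ne' hr))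
  exact hrCubic_eq_zero_of_isAdjEigenvalue_HR (by linarith) hρ2.ne' (by linarith) hρ.1
end
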